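/- Let k be a positive integer. There exists a constant C = C(k) > 0 such that the following holds. Let H > 0 and n_0 ≥ H be real numbers, let E ≥ 0, and let β_1, …, β_k be real numbers with the convention β_{k+1} = 0. Suppose that |j·β_j + (j+1)·n_0·β_{j+1}| ≤ E·n_0/H^{j+1} for all 1 ≤ j ≤ k. Then |β_j − (−1)^{j−1} β_1/(j · n_0^{j−1})| ≤ C·E/H^j for all 1 ≤ j ≤ k+1; in particular (the case j = k+1) one has |β_1| ≤ C·E·n_0^k/H^{k+1}. -/
import Mathlib

open scoped BigOperators

/-- If `|j β_j + (j+1) n₀ β_{j+1}| ≤ E n₀/H^{j+1}` for `1 ≤ j ≤ k` (with `β_{k+1} = 0`),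
then `|β_j - (-1)^{j-1} β_1/(j n₀^{j-1})| ≤ C E/H^j` for all `1 ≤ j ≤ k+1`; in particular
(the case `j = k+1`) one has `|β_1| ≤ C E n₀^k/H^{k+1}`. -/
theorem stmt_13 (k : ℕ) (hk : 1 ≤ k) :
    ∃ C : ℝ, 0 < C ∧ ∀ H n₀ E : ℝ, 0 < H → H ≤ n₀ → 0 ≤ E →
    ∀ β : ℕ → ℝ, β (k+1) = 0 →
    (∀ j, 1 ≤ j → j ≤ k →
      |(j:ℝ) * β j + ((j:ℝ)+1) * n₀ * β (j+1)| ≤ E * n₀ / H^(j+1)) →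
    (∀ j, 1 ≤ j → j ≤ k+1 →
      |β j - (-1:ℝ)^(j-1) * β 1 / ((j:ℝ) * n₀^(j-1))| ≤ C * E / H^j) ∧
    |β 1| ≤ C * E * n₀^k / H^(k+1) := by
  refine ⟨((k:ℝ)+1)^2, by positivity, ?_⟩
  intro H n₀ E hH hHn hE β hβtop hrec
  have hn₀ : 0 < n₀ := lt_of_lt_of_le hH hHn
  have key : ∀ j, 1 ≤ j → j ≤ k+1 →
      |β j - (-1:ℝ)^(j-1) * β 1 / ((j:ℝ) * n₀^(j-1))| ≤ ((j:ℝ)-1) * E / H^j := by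
    intro j hj1
    induction j, hj1 using Nat.le_induction with
    | base =>
      intro _
      norm_num
    | succ j hj ih =>
      intro hjk1
      have hjk : j ≤ k := by omega
      have ihb : |β j - (-1:ℝ)^(j-1) * β 1 / ((j:ℝ) * n₀^(j-1))| ≤ ((j:ℝ)-1) * E / H^j :=
        ih (by omega)
      obtain ⟨m, rfl⟩ : ∃ m, j = m+1 := ⟨j-1, by omega⟩
      set gj := β (m+1) - (-1:ℝ)^((m+1)-1) * β 1 / (((m+1:ℕ):ℝ) * n₀^((m+1)-1)) with hgj
      set g' := β (m+1+1) - (-1:ℝ)^((m+1+1)-1) * β 1 / (((m+1+1:ℕ):ℝ) * n₀^((m+1+1)-1)) with hg'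
      have hD := hrec (m+1) (by omega) hjk
      have hid : ((m+1:ℕ):ℝ) * gj + (((m+1:ℕ):ℝ)+1) * n₀ * g'
          = ((m+1:ℕ):ℝ) * β (m+1) + (((m+1:ℕ):ℝ)+1) * n₀ * β (m+1+1) := by
        rw [hgj, hg']
        push_cast
        field_simp
        ring
      have h2 : (((m+1:ℕ):ℝ)+1) * n₀ * |g'|
          ≤ E * n₀ / H^(m+1+1) + ((m+1:ℕ):ℝ) * |gj| := by
        have e1 : (((m+1:ℕ):ℝ)+1) * n₀ * g'
            = (((m+1:ℕ):ℝ) * β (m+1) + (((m+1:ℕ):ℝ)+1) * n₀ * β (m+1+1))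
              - ((m+1:ℕ):ℝ) * gj := by linarith [hid]
        calc (((m+1:ℕ):ℝ)+1) * n₀ * |g'|
            = |(((m+1:ℕ):ℝ)+1) * n₀ * g'| := by
              rw [abs_mul, abs_of_pos (by positivity : (0:ℝ) < (((m+1:ℕ):ℝ)+1) * n₀)]
          _ ≤ |((m+1:ℕ):ℝ) * β (m+1) + (((m+1:ℕ):ℝ)+1) * n₀ * β (m+1+1)|
              + |((m+1:ℕ):ℝ) * gj| := by rw [e1]; exact abs_sub _ _
          _ ≤ E * n₀ / H^(m+1+1) + ((m+1:ℕ):ℝ) * |gj| := by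
              rw [abs_mul, Nat.abs_cast]
              exact add_le_add hD le_rfl
      have hgjb : |gj| ≤ ((m:ℝ)) * E / H^(m+1) := by
        have e : (((m+1:ℕ):ℝ)-1) * E / H^(m+1) = (m:ℝ) * E / H^(m+1) := by push_cast; ring
        linarith [ihb, e.ge, e.le]
      have hEj : E / H^(m+1) ≤ E * n₀ / H^(m+1+1) := by
        rw [div_le_div_iff₀ (by positivity) (by positivity), pow_succ]
        calc E * (H^(m+1) * H) = (E * H^(m+1)) * H := by ring
          _ ≤ (E * H^(m+1)) * n₀ := mul_le_mul_of_nonneg_left hHn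
              (mul_nonneg hE (pow_nonneg hH.le (m+1)))
          _ = E * n₀ * H^(m+1) := by ring
      have hA : (0:ℝ) ≤ E * n₀ / H^(m+1+1) := by positivity
      have h3 : ((m+1:ℕ):ℝ) * |gj| ≤ ((m+1:ℕ):ℝ) * ((m:ℝ) * E / H^(m+1)) :=
        mul_le_mul_of_nonneg_left hgjb (by positivity)
      have h4 : ((m+1:ℕ):ℝ) * ((m:ℝ) * E / H^(m+1))
          ≤ (((m+1:ℕ):ℝ) * (m:ℝ)) * (E * n₀ / H^(m+1+1)) := by
        have h := mul_le_mul_of_nonneg_left hEj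
          (show (0:ℝ) ≤ ((m+1:ℕ):ℝ) * (m:ℝ) by positivity)
        calc ((m+1:ℕ):ℝ) * ((m:ℝ) * E / H^(m+1))
            = (((m+1:ℕ):ℝ) * (m:ℝ)) * (E / H^(m+1)) := by ring
          _ ≤ (((m+1:ℕ):ℝ) * (m:ℝ)) * (E * n₀ / H^(m+1+1)) := h
      have hfin : (((m+1:ℕ):ℝ)+1) * n₀ * |g'|
          ≤ (((m+1:ℕ):ℝ)+1) * n₀ * (((m+1:ℕ):ℝ) * E / H^(m+1+1)) := by
        have h5 : (((m+1:ℕ):ℝ)+1) * n₀ * (((m+1:ℕ):ℝ) * E / H^(m+1+1))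
            = ((((m+1:ℕ):ℝ)+1) * ((m+1:ℕ):ℝ)) * (E * n₀ / H^(m+1+1)) := by
          push_cast; ring
        rw [h5]
        push_cast at h2 h3 h4 ⊢
        nlinarith [hA, mul_nonneg (Nat.cast_nonneg (α := ℝ) m) hA]
      have hcancel : |g'| ≤ ((m+1:ℕ):ℝ) * E / H^(m+1+1) := by
        have hpos : (0:ℝ) < (((m+1:ℕ):ℝ)+1) * n₀ := by positivity
        exact le_of_mul_le_mul_left hfin hpos
      calc |g'| ≤ ((m+1:ℕ):ℝ) * E / H^(m+1+1) := hcancel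
        _ = (((m+1+1:ℕ):ℝ)-1) * E / H^(m+1+1) := by push_cast; ring
  have hC : ∀ j : ℕ, j ≤ k+1 → ((j:ℝ)-1) ≤ ((k:ℝ)+1)^2 := by
    intro j hj
    have h1 : (j:ℝ) ≤ (k:ℝ)+1 := by exact_mod_cast hj
    nlinarith [Nat.cast_nonneg (α := ℝ) k]
  constructor
  · intro j hj1 hjk
    calc |β j - (-1:ℝ)^(j-1) * β 1 / ((j:ℝ) * n₀^(j-1))| ≤ ((j:ℝ)-1) * E / H^j :=
          key j hj1 hjk
      _ ≤ ((k:ℝ)+1)^2 * E / H^j := by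
          have h1 : (0:ℝ) ≤ E / H^j := by positivity
          have h2 := hC j hjk
          calc ((j:ℝ)-1) * E / H^j = ((j:ℝ)-1) * (E / H^j) := by ring
            _ ≤ ((k:ℝ)+1)^2 * (E / H^j) := mul_le_mul_of_nonneg_right h2 h1
            _ = ((k:ℝ)+1)^2 * E / H^j := by ring
  · have h := key (k+1) (by omega) le_rfl
    rw [hβtop] at h
    have he : |(0:ℝ) - (-1:ℝ)^((k+1)-1) * β 1 / (((k+1:ℕ):ℝ) * n₀^((k+1)-1))|
        = |β 1| / (((k:ℝ)+1) * n₀^k) := by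
      have hd : (0:ℝ) < ((k+1:ℕ):ℝ) * n₀^((k+1)-1) := by positivity
      rw [zero_sub, abs_neg, abs_div, abs_mul, abs_pow, abs_neg, abs_one, one_pow, one_mul,
        abs_of_pos hd]
      norm_num
    rw [he] at h
    have hkpos : (0:ℝ) < ((k:ℝ)+1) * n₀^k := by positivity
    rw [div_le_iff₀ hkpos] at h
    have e2 : (((k+1:ℕ):ℝ)-1) * E / H^(k+1) * (((k:ℝ)+1) * n₀^k)
        = ((k:ℝ) * ((k:ℝ)+1)) * (E * n₀^k / H^(k+1)) := by push_cast; ring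
    have h6 : (k:ℝ) * ((k:ℝ)+1) ≤ ((k:ℝ)+1)^2 := by nlinarith [Nat.cast_nonneg (α := ℝ) k]
    have h7 : (0:ℝ) ≤ E * n₀^k / H^(k+1) := by positivity
    calc |β 1| ≤ ((k:ℝ) * ((k:ℝ)+1)) * (E * n₀^k / H^(k+1)) := by rw [← e2]; exact h
      _ ≤ ((k:ℝ)+1)^2 * (E * n₀^k / H^(k+1)) := mul_le_mul_of_nonneg_right h6 h7
      _ = ((k:ℝ)+1)^2 * E * n₀^k / H^(k+1) := by ring
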